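/- Let L ≥ 1 be a number of queries, and for each i = 1,…,L let m_i ≥ 1 be the number of relevant documents. Suppose for each i and each j = 1,…,m_i we have positions R_{ij} ≥ 1 and approximations R̂_{ij} ≥ 1 with |R̂_{ij} - R_{ij}| ≤ ε. Define Λ = (1/L) Σ_i (1/m_i) Σ_j j/R_{ij} and Λ̂ = (1/L) Σ_i (1/m_i) Σ_j j/R̂_{ij}. Then |Λ̂ - Λ| ≤ ε·(L + Σ_i m_i)/(2L). -/

import Mathlib

lemma sum_Icc_cast_id (m : ℕ) : ∑ j ∈ Finset.Icc 1 m, (j:ℝ) = m*(m+1)/2 := by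
  induction m with
  | zero => simp
  | succ n ih =>
    rw [Finset.sum_Icc_succ_top (by omega)]
    push_cast
    rw [ih]; ring

theorem map_approx_bound (L : ℕ) (hL : 1 ≤ L) (m : ℕ → ℕ)
    (hm : ∀ i ∈ Finset.range L, 1 ≤ m i)
    (R Rhat : ℕ → ℕ → ℝ) (ε : ℝ)
    (hR : ∀ i ∈ Finset.range L, ∀ j ∈ Finset.Icc 1 (m i), 1 ≤ R i j)
    (hRhat : ∀ i ∈ Finset.range L, ∀ j ∈ Finset.Icc 1 (m i), 1 ≤ Rhat i j)
    (happ : ∀ i ∈ Finset.range L, ∀ j ∈ Finset.Icc 1 (m i), |Rhat i j - R i j| ≤ ε) :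
    |(1/(L:ℝ)) * ∑ i ∈ Finset.range L, (1/(m i : ℝ)) * ∑ j ∈ Finset.Icc 1 (m i), (j : ℝ) / Rhat i j -
      (1/(L:ℝ)) * ∑ i ∈ Finset.range L, (1/(m i : ℝ)) * ∑ j ∈ Finset.Icc 1 (m i), (j : ℝ) / R i j|
      ≤ ε * ((L : ℝ) + ∑ i ∈ Finset.range L, (m i : ℝ)) / (2 * L) := by
  have hLpos : (0:ℝ) < L := by exact_mod_cast hL
  have key : ∀ i ∈ Finset.range L,
      |(1/(m i:ℝ)) * ∑ j ∈ Finset.Icc 1 (m i), (j:ℝ)/Rhat i j -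
       (1/(m i:ℝ)) * ∑ j ∈ Finset.Icc 1 (m i), (j:ℝ)/R i j| ≤ ε * ((m i:ℝ)+1)/2 := by
    intro i hi
    have hmi : (1:ℝ) ≤ m i := by exact_mod_cast hm i hi
    have hmi0 : (0:ℝ) < m i := by linarith
    rw [← mul_sub, ← Finset.sum_sub_distrib, abs_mul,
      abs_of_nonneg (by positivity : (0:ℝ) ≤ 1/(m i:ℝ))]
    have hsum : |∑ j ∈ Finset.Icc 1 (m i), ((j:ℝ)/Rhat i j - (j:ℝ)/R i j)|
        ≤ ∑ j ∈ Finset.Icc 1 (m i), (j:ℝ) * ε := by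
      refine (Finset.abs_sum_le_sum_abs _ _).trans (Finset.sum_le_sum ?_)
      intro j hj
      have h1 := hR i hi j hj
      have h2 := hRhat i hi j hj
      have h3 := happ i hi j hj
      have hRp : (0:ℝ) < R i j := by linarith
      have hRhp : (0:ℝ) < Rhat i j := by linarith
      have heq : |(j:ℝ) * R i j - Rhat i j * (j:ℝ)| = (j:ℝ) * |Rhat i j - R i j| := by
        rw [mul_comm (Rhat i j), ← mul_sub, abs_mul, abs_of_nonneg (Nat.cast_nonneg j),
          abs_sub_comm]
      rw [div_sub_div _ _ (ne_of_gt hRhp) (ne_of_gt hRp), abs_div,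
        abs_of_pos (mul_pos hRhp hRp), heq]
      calc (j:ℝ) * |Rhat i j - R i j| / (Rhat i j * R i j)
          ≤ (j:ℝ) * ε / 1 :=
            div_le_div₀ (mul_nonneg (Nat.cast_nonneg j) ((abs_nonneg _).trans h3))
              (mul_le_mul_of_nonneg_left h3 (Nat.cast_nonneg j)) one_pos (by nlinarith)
        _ = (j:ℝ) * ε := div_one _
    calc 1/(m i:ℝ) * |∑ j ∈ Finset.Icc 1 (m i), ((j:ℝ)/Rhat i j - (j:ℝ)/R i j)|
        ≤ 1/(m i:ℝ) * ∑ j ∈ Finset.Icc 1 (m i), (j:ℝ) * ε := by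
          exact mul_le_mul_of_nonneg_left hsum (by positivity)
      _ = ε * ((m i:ℝ)+1)/2 := by
          rw [← Finset.sum_mul, sum_Icc_cast_id]
          field_simp
  calc |(1/(L:ℝ)) * ∑ i ∈ Finset.range L, (1/(m i : ℝ)) * ∑ j ∈ Finset.Icc 1 (m i), (j : ℝ) / Rhat i j -
      (1/(L:ℝ)) * ∑ i ∈ Finset.range L, (1/(m i : ℝ)) * ∑ j ∈ Finset.Icc 1 (m i), (j : ℝ) / R i j|
      = (1/(L:ℝ)) * |∑ i ∈ Finset.range L,
          ((1/(m i : ℝ)) * ∑ j ∈ Finset.Icc 1 (m i), (j : ℝ) / Rhat i j -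
           (1/(m i : ℝ)) * ∑ j ∈ Finset.Icc 1 (m i), (j : ℝ) / R i j)| := by
        rw [← mul_sub, ← Finset.sum_sub_distrib, abs_mul,
          abs_of_nonneg (by positivity : (0:ℝ) ≤ 1/(L:ℝ))]
    _ ≤ (1/(L:ℝ)) * ∑ i ∈ Finset.range L, (ε * ((m i:ℝ)+1)/2) := by
        refine mul_le_mul_of_nonneg_left ((Finset.abs_sum_le_sum_abs _ _).trans
          (Finset.sum_le_sum key)) (by positivity)
    _ = ε * ((L : ℝ) + ∑ i ∈ Finset.range L, (m i : ℝ)) / (2 * L) := by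
        rw [← Finset.sum_div, ← Finset.mul_sum]
        simp only [mul_add, mul_one, Finset.sum_add_distrib, Finset.sum_const,
          Finset.card_range, nsmul_eq_mul, ← Finset.mul_sum]
        field_simp
        ring
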